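/- Let F and F̂ be two row-stochastic matrices in ℝ^{m×n}, let R ∈ ℝ^m, Δ ∈ ℝ^n, and define R̂ := R + (γF̂ − S)Δ. Set ε := ‖F̂ − F‖₂, the operator norm induced by Euclidean norms. Then, with value vectors computed with respect to F, for every deterministic policy π: ‖V_{π,R̂} − (V_{π,R} − Δ)‖₂ ≤ ε √n · (γ/(1−γ)) · ‖Δ‖₂. -/
import Mathlib


open Matrix MeasureTheory Filter Topology

noncomputable section

/-- The policy matrix `Π` of a deterministic policy `π`. -/
def polMat {n m : ℕ} (π : Fin n → Fin m) : Matrix (Fin n) (Fin m) ℝ :=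
  Matrix.of fun i j => if j = π i then 1 else 0

/-- The matrix `S` with `S^j_i = 1` iff `s j = i`. -/
def projMat {n m : ℕ} (s : Fin m → Fin n) : Matrix (Fin m) (Fin n) ℝ :=
  Matrix.of fun j i => if s j = i then 1 else 0

/-- A row-stochastic matrix: nonnegative entries, rows summing to one. -/
def RowStochastic {n m : ℕ} (F : Matrix (Fin m) (Fin n) ℝ) : Prop :=
  (∀ j i, 0 ≤ F j i) ∧ ∀ j, ∑ i, F j i = 1

/-- A deterministic policy: a section of the state projection `s`. -/
def IsPolicy {n m : ℕ} (s : Fin m → Fin n) (π : Fin n → Fin m) : Prop :=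
  ∀ i, s (π i) = i

/-- The value vector `V_{π,R} = (I − γΠF)⁻¹ Π R`. -/
def valueVec {n m : ℕ} (γ : ℝ) (F : Matrix (Fin m) (Fin n) ℝ)
    (π : Fin n → Fin m) (R : Fin m → ℝ) : Fin n → ℝ :=
  ((1 : Matrix (Fin n) (Fin n) ℝ) - γ • (polMat π * F))⁻¹ *ᵥ (polMat π *ᵥ R)

/-- A policy is optimal for `R` when its value vector dominates all others componentwise. -/
def IsOptimal {n m : ℕ} (s : Fin m → Fin n) (γ : ℝ) (F : Matrix (Fin m) (Fin n) ℝ)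
    (R : Fin m → ℝ) (π : Fin n → Fin m) : Prop :=
  IsPolicy s π ∧ ∀ π', IsPolicy s π' → ∀ i, valueVec γ F π' R i ≤ valueVec γ F π R i

/-- `hmax R i = max_{j ∈ U_i} R j`. -/
def hmax {n m : ℕ} (s : Fin m → Fin n) (R : Fin m → ℝ) (i : Fin n) : ℝ :=
  sSup {x | ∃ j, s j = i ∧ R j = x}


/-- The Euclidean norm of a vector. -/
def l2norm {k : ℕ} (v : Fin k → ℝ) : ℝ := Real.sqrt (∑ i, v i ^ 2)

/-- The operator norm induced by Euclidean norms (supremum over the closed unit ball). -/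
def opNorm2 {a b : ℕ} (M : Matrix (Fin a) (Fin b) ℝ) : ℝ :=
  sSup {c : ℝ | ∃ v : Fin b → ℝ, l2norm v ≤ 1 ∧ c = l2norm (M *ᵥ v)}

lemma l2norm_nonneg {k : ℕ} (v : Fin k → ℝ) : 0 ≤ l2norm v := Real.sqrt_nonneg _

lemma abs_le_l2norm {k : ℕ} (v : Fin k → ℝ) (j : Fin k) : |v j| ≤ l2norm v := by
  rw [l2norm, ← Real.sqrt_sq_eq_abs]
  exact Real.sqrt_le_sqrt (Finset.single_le_sum (fun i _ => sq_nonneg (v i)) (Finset.mem_univ j))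

lemma l2norm_zero {k : ℕ} : l2norm (0 : Fin k → ℝ) = 0 := by simp [l2norm]

lemma l2norm_smul {k : ℕ} (a : ℝ) (v : Fin k → ℝ) : l2norm (a • v) = |a| * l2norm v := by
  simp only [l2norm, Pi.smul_apply, smul_eq_mul, mul_pow, ← Finset.mul_sum]
  rw [Real.sqrt_mul (sq_nonneg a), Real.sqrt_sq_eq_abs]

lemma l2norm_eq_zero {k : ℕ} {v : Fin k → ℝ} (h : l2norm v = 0) : v = 0 := by
  have hle : ∑ i, v i ^ 2 ≤ 0 := (Real.sqrt_eq_zero' ).mp h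
  have hs : ∑ i, v i ^ 2 = 0 :=
    le_antisymm hle (Finset.sum_nonneg fun i _ => sq_nonneg _)
  funext i
  have := (Finset.sum_eq_zero_iff_of_nonneg (fun i _ => sq_nonneg (v i))).mp hs i (Finset.mem_univ i)
  exact pow_eq_zero_iff (by norm_num) |>.mp this

lemma l2norm_le_sqrt_mul {k : ℕ} {v : Fin k → ℝ} {c : ℝ} (hc : 0 ≤ c)
    (h : ∀ i, |v i| ≤ c) : l2norm v ≤ Real.sqrt k * c := by
  rw [l2norm, ← Real.sqrt_sq hc, ← Real.sqrt_mul (by positivity)]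
  apply Real.sqrt_le_sqrt
  calc ∑ i, v i ^ 2 ≤ ∑ _i : Fin k, c ^ 2 := by
        refine Finset.sum_le_sum fun i _ => ?_
        rw [← sq_abs]; exact pow_le_pow_left₀ (abs_nonneg _) (h i) 2
    _ = k * c ^ 2 := by simp [mul_comm]

lemma l2norm_mulVec_le {a b : ℕ} (M : Matrix (Fin a) (Fin b) ℝ) (v : Fin b → ℝ) :
    l2norm (M *ᵥ v) ≤ opNorm2 M * l2norm v := by
  set Sset := {c : ℝ | ∃ u : Fin b → ℝ, l2norm u ≤ 1 ∧ c = l2norm (M *ᵥ u)} with hSdef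
  have hbdd : BddAbove Sset := by
    refine ⟨Real.sqrt (∑ j, ∑ i, M j i ^ 2), ?_⟩
    rintro c ⟨u, hu, rfl⟩
    apply Real.sqrt_le_sqrt
    refine Finset.sum_le_sum fun j _ => ?_
    have h1 : (∑ i, u i ^ 2) ≤ 1 := by
      calc (∑ i, u i ^ 2) = (l2norm u) ^ 2 := (Real.sq_sqrt (by positivity)).symm
        _ ≤ 1 ^ 2 := pow_le_pow_left₀ (l2norm_nonneg u) hu 2
        _ = 1 := one_pow 2
    calc (M *ᵥ u) j ^ 2 = (∑ i, M j i * u i) ^ 2 := rfl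
      _ ≤ (∑ i, M j i ^ 2) * (∑ i, u i ^ 2) := Finset.sum_mul_sq_le_sq_mul_sq _ _ _
      _ ≤ (∑ i, M j i ^ 2) * 1 := by
          exact mul_le_mul_of_nonneg_left h1 (Finset.sum_nonneg fun i _ => sq_nonneg _)
      _ = ∑ i, M j i ^ 2 := mul_one _
  have hmem0 : (0 : ℝ) ∈ Sset := ⟨0, by simp [l2norm_zero], by simp [l2norm_zero]⟩
  have hop0 : 0 ≤ opNorm2 M := le_csSup hbdd hmem0
  rcases eq_or_lt_of_le (l2norm_nonneg v) with h0 | h0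
  · have hv : v = 0 := l2norm_eq_zero h0.symm
    simp [hv, l2norm_zero, ← h0]
  · set t := l2norm v with ht
    have hmem : l2norm (M *ᵥ (t⁻¹ • v)) ∈ Sset := by
      refine ⟨t⁻¹ • v, le_of_eq ?_, rfl⟩
      rw [l2norm_smul, abs_of_nonneg (inv_nonneg.mpr h0.le), inv_mul_cancel₀ h0.ne']
    have hle : l2norm (M *ᵥ (t⁻¹ • v)) ≤ opNorm2 M := le_csSup hbdd hmem
    rw [Matrix.mulVec_smul, l2norm_smul, abs_of_nonneg (inv_nonneg.mpr h0.le)] at hle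
    calc l2norm (M *ᵥ v) = t * (t⁻¹ * l2norm (M *ᵥ v)) := by
          field_simp
      _ ≤ t * opNorm2 M := mul_le_mul_of_nonneg_left hle h0.le
      _ = opNorm2 M * t := mul_comm _ _

lemma polMat_mulVec {n m : ℕ} (π : Fin n → Fin m) (v : Fin m → ℝ) (i : Fin n) :
    (polMat π *ᵥ v) i = v (π i) := by
  simp [polMat, Matrix.mulVec, dotProduct]

lemma polMat_mul_apply {n m : ℕ} (π : Fin n → Fin m) (F : Matrix (Fin m) (Fin n) ℝ)
    (i : Fin n) (j : Fin n) : (polMat π * F) i j = F (π i) j := by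
  simp [polMat, Matrix.mul_apply]

lemma polMat_mul_projMat {n m : ℕ} {s : Fin m → Fin n} {π : Fin n → Fin m}
    (hπ : IsPolicy s π) : polMat π * projMat s = 1 := by
  ext i i'
  rw [Matrix.mul_apply]
  simp only [polMat, projMat, Matrix.of_apply, Matrix.one_apply]
  rw [Finset.sum_eq_single (π i)]
  · simp [hπ i, eq_comm]
  · intro b _ hb; simp [hb]
  · intro h; exact absurd (Finset.mem_univ _) h

/-- M row-stochastic: sup-norm contraction. -/
lemma stoch_mulVec_bound {k : ℕ} {M : Matrix (Fin k) (Fin k) ℝ}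
    (h0 : ∀ i j, 0 ≤ M i j) (h1 : ∀ i, ∑ j, M i j = 1) {x : Fin k → ℝ} {c : ℝ}
    (hx : ∀ j, |x j| ≤ c) (i : Fin k) : |(M *ᵥ x) i| ≤ c := by
  calc |(M *ᵥ x) i| = |∑ j, M i j * x j| := by simp [Matrix.mulVec, dotProduct]
    _ ≤ ∑ j, |M i j * x j| := Finset.abs_sum_le_sum_abs _ _
    _ ≤ ∑ j, M i j * c := by
        refine Finset.sum_le_sum fun j _ => ?_
        rw [abs_mul, abs_of_nonneg (h0 i j)]
        exact mul_le_mul_of_nonneg_left (hx j) (h0 i j)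
    _ = c := by rw [← Finset.sum_mul, h1, one_mul]

lemma det_one_sub_smul_ne_zero {k : ℕ} {γ : ℝ} (hγ0 : 0 ≤ γ) (hγ1 : γ < 1)
    {M : Matrix (Fin k) (Fin k) ℝ} (h0 : ∀ i j, 0 ≤ M i j) (h1 : ∀ i, ∑ j, M i j = 1) :
    ((1 : Matrix (Fin k) (Fin k) ℝ) - γ • M).det ≠ 0 := by
  intro hdet
  obtain ⟨x, hx0, hAx⟩ := Matrix.exists_mulVec_eq_zero_iff.mpr hdet
  have hne : Nonempty (Fin k) := by
    by_contra h
    rw [not_nonempty_iff] at h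
    exact hx0 (funext fun i => (h.false i).elim)
  have hk : (Finset.univ : Finset (Fin k)).Nonempty := Finset.univ_nonempty
  obtain ⟨i₀, _, hmax⟩ := Finset.exists_max_image Finset.univ (fun j => |x j|) hk
  have hxe : ∀ i, x i = γ * (M *ᵥ x) i := by
    intro i
    have := congrFun hAx i
    have hexp : ((1 : Matrix (Fin k) (Fin k) ℝ) - γ • M) *ᵥ x = x - γ • (M *ᵥ x) := by
      rw [Matrix.sub_mulVec, Matrix.one_mulVec, Matrix.smul_mulVec]
    rw [hexp] at this
    have := sub_eq_zero.mp this
    simpa using this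
  have hb : |x i₀| ≤ γ * |x i₀| := by
    calc |x i₀| = γ * |(M *ᵥ x) i₀| := by rw [hxe i₀, abs_mul, abs_of_nonneg hγ0]
      _ ≤ γ * |x i₀| := by
          refine mul_le_mul_of_nonneg_left ?_ hγ0
          exact stoch_mulVec_bound h0 h1 (fun j => hmax j (Finset.mem_univ j)) i₀
  have hzero : |x i₀| = 0 := by nlinarith [abs_nonneg (x i₀)]
  apply hx0
  funext i
  have : |x i| ≤ 0 := hzero ▸ hmax i (Finset.mem_univ i)
  simpa using le_antisymm this (abs_nonneg _)


/-- Quantitative bound on the deviation of the perturbed update from the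
exact-model update: `‖V_{π,R̂} − (V_{π,R} − Δ)‖₂ ≤ ε √n (γ/(1−γ)) ‖Δ‖₂` with
`ε = ‖F̂ − F‖₂`. -/
theorem approximate_model_deviation_bound {n m : ℕ} (hn : 1 ≤ n) (hm : 1 ≤ m)
    (s : Fin m → Fin n) (hs : Function.Surjective s)
    (γ : ℝ) (hγ0 : 0 ≤ γ) (hγ1 : γ < 1)
    (F Fhat : Matrix (Fin m) (Fin n) ℝ)
    (hF : RowStochastic F) (hFhat : RowStochastic Fhat)
    (R : Fin m → ℝ) (Δ : Fin n → ℝ)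
    (π : Fin n → Fin m) (hπ : IsPolicy s π) :
    l2norm (valueVec γ F π (R + (γ • Fhat - projMat s) *ᵥ Δ) -
        (valueVec γ F π R - Δ)) ≤
      opNorm2 (Fhat - F) * Real.sqrt n * (γ / (1 - γ)) * l2norm Δ := by
  set M := polMat π * F with hM
  have hM0 : ∀ i j, 0 ≤ M i j := fun i j => by
    rw [hM, polMat_mul_apply]; exact hF.1 _ _
  have hM1 : ∀ i, ∑ j, M i j = 1 := fun i => by
    simp only [hM, polMat_mul_apply]; exact hF.2 _
  set A := (1 : Matrix (Fin n) (Fin n) ℝ) - γ • M with hA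
  have hdet : A.det ≠ 0 := det_one_sub_smul_ne_zero hγ0 hγ1 hM0 hM1
  have hunit : IsUnit A.det := isUnit_iff_ne_zero.mpr hdet
  set w := valueVec γ F π (R + (γ • Fhat - projMat s) *ᵥ Δ) - (valueVec γ F π R - Δ) with hw
  set y := γ • (polMat π *ᵥ ((Fhat - F) *ᵥ Δ)) with hy
  -- A *ᵥ (valueVec ... R') = polMat π *ᵥ R'
  have hAV : ∀ R' : Fin m → ℝ, A *ᵥ valueVec γ F π R' = polMat π *ᵥ R' := by
    intro R'
    rw [valueVec, ← hM, ← hA, Matrix.mulVec_mulVec, Matrix.mul_nonsing_inv A hunit,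
      Matrix.one_mulVec]
  have hAw : A *ᵥ w = y := by
    rw [hw, Matrix.mulVec_sub, hAV, Matrix.mulVec_sub, hAV]
    have hRhat : polMat π *ᵥ (R + (γ • Fhat - projMat s) *ᵥ Δ) =
        polMat π *ᵥ R + (γ • (polMat π * Fhat)) *ᵥ Δ - Δ := by
      rw [Matrix.mulVec_add, Matrix.mulVec_mulVec]
      rw [Matrix.mul_sub, Matrix.mul_smul, polMat_mul_projMat hπ, Matrix.sub_mulVec,
        Matrix.one_mulVec, Matrix.smul_mulVec]
      abel
    rw [hRhat, hA, Matrix.sub_mulVec, Matrix.one_mulVec, hy]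
    rw [Matrix.smul_mulVec, Matrix.smul_mulVec, Matrix.mulVec_mulVec,
      Matrix.mul_sub, Matrix.sub_mulVec, smul_sub]
    abel
  -- pointwise: w = γ • (M *ᵥ w) + y
  have hfix : ∀ i, w i = γ * (M *ᵥ w) i + y i := by
    intro i
    have := congrFun hAw i
    rw [hA, Matrix.sub_mulVec, Matrix.one_mulVec, Matrix.smul_mulVec] at this
    have : w i - γ * (M *ᵥ w) i = y i := this
    linarith
  -- bound on |y i|
  set ε := opNorm2 (Fhat - F) with hε
  have hq : l2norm ((Fhat - F) *ᵥ Δ) ≤ ε * l2norm Δ := l2norm_mulVec_le _ _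
  have hyb : ∀ i, |y i| ≤ γ * (ε * l2norm Δ) := by
    intro i
    rw [hy]
    simp only [Pi.smul_apply, smul_eq_mul, abs_mul, abs_of_nonneg hγ0]
    refine mul_le_mul_of_nonneg_left ?_ hγ0
    rw [polMat_mulVec]
    exact (abs_le_l2norm _ _).trans hq
  -- max of |w|
  have hk : (Finset.univ : Finset (Fin n)).Nonempty :=
    Finset.univ_nonempty_iff.mpr (Fin.pos_iff_nonempty.mp hn)
  obtain ⟨i₀, _, hmax⟩ := Finset.exists_max_image Finset.univ (fun j => |w j|) hk
  set c := |w i₀| with hc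
  have hcw : ∀ i, |w i| ≤ c := fun i => hmax i (Finset.mem_univ i)
  have hcb : c ≤ γ * (ε * l2norm Δ) / (1 - γ) := by
    have h1 : c ≤ γ * c + γ * (ε * l2norm Δ) := by
      calc c = |γ * (M *ᵥ w) i₀ + y i₀| := by rw [hc, hfix i₀]
        _ ≤ |γ * (M *ᵥ w) i₀| + |y i₀| := abs_add_le _ _
        _ ≤ γ * c + γ * (ε * l2norm Δ) := by
            refine add_le_add ?_ (hyb i₀)
            rw [abs_mul, abs_of_nonneg hγ0]
            exact mul_le_mul_of_nonneg_left (stoch_mulVec_bound hM0 hM1 hcw i₀) hγ0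
    rw [le_div_iff₀ (by linarith)]
    nlinarith
  have hfin : l2norm w ≤ Real.sqrt n * c :=
    l2norm_le_sqrt_mul (abs_nonneg _) hcw
  calc l2norm w ≤ Real.sqrt n * c := hfin
    _ ≤ Real.sqrt n * (γ * (ε * l2norm Δ) / (1 - γ)) :=
        mul_le_mul_of_nonneg_left hcb (Real.sqrt_nonneg _)
    _ = ε * Real.sqrt n * (γ / (1 - γ)) * l2norm Δ := by ring
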